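/- Let T be a string of length n over an alphabet of size σ, and suppose T[i..i+2ℓ) is a parameterized square. Then the number of positions j ∈ [0..ℓ) such that E(T[1..i+j]) ≠ E(T[1..i+ℓ+j]) is at most |alph(T[i..i+ℓ))| ≤ σ; moreover any such position j is the offset of a leftmost occurrence of some character in T[i..i+ℓ). -/

import Mathlib

/-- The set of distinct characters of a string. -/
def alph (X : List ℤ) : Set ℤ := {a | a ∈ X}

/-- Parameterized matching. -/
def PMatch (X Y : List ℤ) : Prop :=
  X.length = Y.length ∧ ∃ f : ℤ → ℤ, Set.BijOn f (alph X) (alph Y) ∧ X.map f = Y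

/-- E(X) = number of distinct characters of the longest suffix of X[1..|X|-1]
avoiding the character X[|X|]. -/
def Efun (X : List ℤ) : ℤ :=
  match X.getLast? with
  | none => 0
  | some c => ((X.dropLast.reverse.takeWhile (fun a => a != c)).dedup.length : ℤ)

/-- The substring T[i..i+len) for a 1-indexed position i. -/
def seg (T : List ℤ) (i len : ℕ) : List ℤ := (T.drop (i - 1)).take len

/-
If the last character `T[i+j]` of the prefix `T[1..i+j]` already occurs in `T[i..i+j)`, then
`E(T[1..i+j])` only looks back into the window `T[i..i+j]`. The parameterized match carries
this window onto `T[i+ℓ..i+ℓ+j]`, whose last character likewise recurs inside it, and `E` is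
invariant under injective renaming of the alphabet. So the two encodings can differ only at
offsets `j` where `T[i+j]` is the leftmost occurrence of its character in `T[i..i+ℓ)`, and
distinct such offsets carry distinct characters.
-/

namespace List

variable {α β : Type*}

theorem takeWhile_congr {p q : α → Bool} :
    ∀ {l : List α}, (∀ a ∈ l, p a = q a) → l.takeWhile p = l.takeWhile q
  | [], _ => rfl
  | a :: l, h => by
    rw [takeWhile_cons, takeWhile_cons, h a mem_cons_self,
      takeWhile_congr fun b hb => h b (mem_cons_of_mem a hb)]

theorem takeWhile_append_of_exists_not {p : α → Bool} {l₁ : List α} (l₂ : List α)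
    (h : ∃ a ∈ l₁, p a = false) : (l₁ ++ l₂).takeWhile p = l₁.takeWhile p := by
  rw [takeWhile_append, if_neg]
  intro hlen
  obtain ⟨a, ha, hpa⟩ := h
  have hall := takeWhile_eq_self_iff.1 ((takeWhile_prefix p).eq_of_length hlen) a ha
  simp_all

theorem dedup_length_map_of_injOn [DecidableEq α] [DecidableEq β] {f : α → β} {l : List α}
    (hf : Set.InjOn f {a | a ∈ l}) : (l.map f).dedup.length = l.dedup.length := by
  rw [← card_toFinset, ← card_toFinset, ← Finset.card_image_of_injOn (s := l.toFinset)
    (by rwa [coe_toFinset])]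
  congr 1
  ext
  simp

theorem dedup_length_le_of_subset [DecidableEq α] {l₁ l₂ : List α} (h : l₁ ⊆ l₂) :
    l₁.dedup.length ≤ l₂.dedup.length := by
  rw [← card_toFinset, ← card_toFinset]
  exact Finset.card_le_card fun a ha => mem_toFinset.2 (h (mem_toFinset.1 ha))

theorem card_le_dedup_length_of_getD_notMem_take [DecidableEq α] (l : List α) (d : α)
    {S : Finset ℕ} (hS : ∀ j ∈ S, j < l.length ∧ l.getD j d ∉ l.take j) :
    S.card ≤ l.dedup.length := by
  rw [← card_toFinset]
  refine Finset.card_le_card_of_injOn (l.getD · d) (fun j hj => ?_) fun j hj k hk hjk => ?_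
  · show l.getD j d ∈ l.toFinset
    rw [mem_toFinset, getD_eq_getElem l d (hS j hj).1]
    exact getElem_mem _
  · replace hjk : l.getD j d = l.getD k d := hjk
    have mem_take {j k} (hjk : j < k) (hk : k < l.length) : l.getD j d ∈ l.take k := by
      rw [getD_eq_getElem _ _ (hjk.trans hk), ← getElem_take (j := k) (h := by simp; omega)]
      exact getElem_mem _
    by_contra hne
    rcases Nat.lt_or_gt_of_ne hne with h | h
    · exact (hS k hk).2 (hjk ▸ mem_take h (hS k hk).1)
    · exact (hS j hj).2 (hjk ▸ mem_take h (hS j hj).1)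

end List

theorem Efun_append_singleton (L : List ℤ) (c : ℤ) :
    Efun (L ++ [c]) = ((L.reverse.takeWhile (· != c)).dedup.length : ℤ) := by
  rw [Efun, List.getLast?_concat, List.dropLast_concat]

theorem Efun_append_of_mem {W : List ℤ} {c : ℤ} (P : List ℤ) (hc : c ∈ W) :
    Efun (P ++ (W ++ [c])) = Efun (W ++ [c]) := by
  rw [← List.append_assoc, Efun_append_singleton, Efun_append_singleton, List.reverse_append,
    List.takeWhile_append_of_exists_not _ ⟨c, List.mem_reverse.2 hc, by simp⟩]

theorem Efun_map_of_injOn {f : ℤ → ℤ} {X : List ℤ} (hf : Set.InjOn f (alph X)) :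
    Efun (X.map f) = Efun X := by
  obtain rfl | ⟨L, c, rfl⟩ := X.eq_nil_or_concat'
  · rfl
  have hL : ∀ a ∈ L, a ∈ alph (L ++ [c]) := fun a ha => List.mem_append_left _ ha
  have hc : c ∈ alph (L ++ [c]) := List.mem_append_right _ (List.mem_singleton_self c)
  have hne : ∀ a ∈ L.reverse, ((· != f c) ∘ f) a = (a != c) := fun a ha => by
    rw [Function.comp_apply, Bool.eq_iff_iff, bne_iff_ne, bne_iff_ne,
      hf.ne_iff (hL a (List.mem_reverse.1 ha)) hc]
  rw [List.map_append, List.map_singleton, Efun_append_singleton, Efun_append_singleton,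
    ← List.map_reverse, List.takeWhile_map, List.takeWhile_congr hne,
    List.dedup_length_map_of_injOn (hf.mono fun a ha => hL a
      (List.mem_reverse.1 (List.takeWhile_subset _ ha)))]

theorem Efun_append_eq_append_map_of_mem {W : List ℤ} {c : ℤ} {f : ℤ → ℤ} (P Q : List ℤ)
    (hf : Set.InjOn f (alph (W ++ [c]))) (hc : c ∈ W) :
    Efun (P ++ (W ++ [c])) = Efun (Q ++ (W ++ [c]).map f) :=
  calc Efun (P ++ (W ++ [c])) = Efun (W ++ [c]) := Efun_append_of_mem P hc
    _ = Efun ((W ++ [c]).map f) := (Efun_map_of_injOn hf).symm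
    _ = Efun (Q ++ (W ++ [c]).map f) := by
      rw [List.map_append, List.map_singleton, Efun_append_of_mem Q (List.mem_map_of_mem hc)]

section seg

variable (T : List ℤ)

theorem take_append_seg {i n m : ℕ} (h : i - 1 + n = m) :
    T.take (i - 1) ++ seg T i n = T.take m := by
  rw [seg, ← List.take_add, h]

theorem seg_add_one {i j : ℕ} (hi : 1 ≤ i) (h : i + j ≤ T.length) :
    seg T i (j + 1) = seg T i j ++ [T.getD (i + j - 1) 0] := by
  rw [seg, seg, List.take_add_one, List.getElem?_drop, List.getD_eq_getElem?_getD,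
    show i - 1 + j = i + j - 1 by omega, List.getElem?_eq_getElem (by omega)]
  rfl

theorem take_seg (i : ℕ) {j n : ℕ} (h : j ≤ n) : (seg T i n).take j = seg T i j := by
  rw [seg, seg, List.take_take, min_eq_left h]

theorem getD_seg {i j n : ℕ} (hi : 1 ≤ i) (h : j < n) :
    (seg T i n).getD j 0 = T.getD (i + j - 1) 0 := by
  simp [seg, List.getD_eq_getElem?_getD, h, show i - 1 + j = i + j - 1 by omega]

theorem length_seg {i n : ℕ} (h : i - 1 + n ≤ T.length) : (seg T i n).length = n := by
  simp only [seg, List.length_take, List.length_drop]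
  omega

theorem seg_subset (i n : ℕ) : seg T i n ⊆ T :=
  fun _ ha => List.mem_of_mem_drop (List.mem_of_mem_take ha)

end seg

theorem psquare_prefix_encoding_mismatches_general
    (T : List ℤ) (σ i ℓ : ℕ)
    (hσ : T.dedup.length ≤ σ)
    (hi : 1 ≤ i) (hbound : i + 2 * ℓ ≤ T.length + 1)
    (hsq : PMatch (seg T i ℓ) (seg T (i + ℓ) ℓ)) :
    let S : Finset ℕ := (Finset.range ℓ).filter
      (fun j => Efun (T.take (i + j)) ≠ Efun (T.take (i + ℓ + j)))
    S.card ≤ (seg T i ℓ).dedup.length ∧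
    (seg T i ℓ).dedup.length ≤ σ ∧
    ∀ j ∈ S, T.getD (i + j - 1) 0 ∉ seg T i j := by
  intro S
  obtain ⟨-, f, hf, hmap⟩ := hsq
  have leftmost : ∀ j ∈ S, T.getD (i + j - 1) 0 ∉ seg T i j := by
    intro j hj hrepeat
    obtain ⟨hj, hne⟩ := Finset.mem_filter.1 hj
    have hjℓ : j + 1 ≤ ℓ := Finset.mem_range.1 hj
    have hwindow : seg T i (j + 1) = seg T i j ++ [T.getD (i + j - 1) 0] :=
      seg_add_one T hi (by omega)
    have hfirst : T.take (i + j) = T.take (i - 1) ++ seg T i (j + 1) :=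
      (take_append_seg T (by omega)).symm
    have hsecond : T.take (i + ℓ + j) = T.take (i + ℓ - 1) ++ (seg T i (j + 1)).map f := by
      rw [← take_seg T i hjℓ, List.map_take, hmap, take_seg T _ hjℓ]
      exact (take_append_seg T (by omega)).symm
    have hinj : Set.InjOn f (alph (seg T i (j + 1))) :=
      hf.injOn.mono (take_seg T i hjℓ ▸ List.take_subset _ _)
    rw [hfirst, hsecond, hwindow] at hne
    exact hne (Efun_append_eq_append_map_of_mem _ _ (hwindow ▸ hinj) hrepeat)
  refine ⟨List.card_le_dedup_length_of_getD_notMem_take _ 0 fun j hj => ?_,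
    (List.dedup_length_le_of_subset (seg_subset T i ℓ)).trans hσ, leftmost⟩
  have hjℓ : j < ℓ := Finset.mem_range.1 (Finset.mem_filter.1 hj).1
  rw [length_seg T (by omega), getD_seg T hi hjℓ, take_seg T i hjℓ.le]
  exact ⟨hjℓ, leftmost j hj⟩

/-- if T[i..i+2ℓ) is a parameterized square, the number of offsets
j ∈ [0..ℓ) with E(T[1..i+j]) ≠ E(T[1..i+ℓ+j]) is at most the number of distinct
characters of T[i..i+ℓ)) ≤ σ, and every such offset is the offset of a leftmost
occurrence of some character in T[i..i+ℓ). -/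
theorem psquare_prefix_encoding_mismatches
    (T : List ℤ) (σ i ℓ : ℕ)
    (hσ : T.dedup.length ≤ σ)
    (hi : 1 ≤ i) (hℓ : 1 ≤ ℓ) (hbound : i + 2 * ℓ ≤ T.length + 1)
    (hsq : PMatch (seg T i ℓ) (seg T (i + ℓ) ℓ)) :
    let S : Finset ℕ := (Finset.range ℓ).filter
      (fun j => Efun (T.take (i + j)) ≠ Efun (T.take (i + ℓ + j)))
    S.card ≤ (seg T i ℓ).dedup.length ∧
    (seg T i ℓ).dedup.length ≤ σ ∧
    ∀ j ∈ S, T.getD (i + j - 1) 0 ∉ seg T i j :=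
  psquare_prefix_encoding_mismatches_general T σ i ℓ hσ hi hbound hsq
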